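/- arXiv:2511.04798 — 2 statements merged into one kernel-verified Lean document; each statement's English description precedes it below -/
import Mathlib

section
/- Let W be a nonnegative random variable with probability density function f : [0,∞) → [0,∞) such that f is continuous on [0,∞), continuously differentiable and strictly decreasing on (0,∞), f(0) < ∞, and f(w) → 0 as w → ∞. For each natural number k, let p_k := ∫_0^∞ f(w)·b_k(w) dw, where b_k is the k-th fractional-bit indicator. Then |p_k − 1/2| ≤ f(0)/2^(2+k); moreover p_k < 1/2 for every k, and p_k → 1/2 as k → ∞. -/
open MeasureTheory Filter Set

/-- The `k`-th fractional-bit indicator: `fracBit k w = 1` iff the remainder of `w`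
modulo `2^(-k)` lies in `[2^(-k-1), 2^(-k))`, equivalently iff the fractional part
of `w * 2^k` lies in `[1/2, 1)`. -/
noncomputable def fracBit (k : ℕ) (w : ℝ) : ℝ :=
  if 1 / 2 ≤ Int.fract (w * 2 ^ k) then 1 else 0

lemma fract_half_flip (x : ℝ) : (1/2 ≤ Int.fract (x + 1/2)) ↔ ¬ (1/2 ≤ Int.fract x) := by
  have hx : x + 1/2 = (⌊x⌋ : ℝ) + (Int.fract x + 1/2) := by
    linarith [Int.fract_add_floor x]
  rw [hx, Int.fract_intCast_add]
  have h0 := Int.fract_nonneg x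
  have h1 := Int.fract_lt_one x
  rcases lt_or_ge (Int.fract x) (1/2) with h | h
  · rw [Int.fract_eq_self.mpr ⟨by linarith, by linarith⟩]
    constructor <;> intro <;> [linarith; linarith]
  · have : Int.fract x + 1/2 = 1 + (Int.fract x - 1/2) := by ring
    rw [this]
    rw [show ((1:ℝ) = ((1:ℤ):ℝ)) by norm_num, Int.fract_intCast_add,
      Int.fract_eq_self.mpr ⟨by linarith, by linarith⟩]
    constructor <;> intro <;> linarith

lemma fracBit_add_half (k : ℕ) (w : ℝ) :
    fracBit k (w + 1/(2*2^k)) = 1 - fracBit k w := by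
  have h2 : (0:ℝ) < 2^k := by positivity
  have hx : (w + 1/(2*2^k)) * 2^k = w * 2^k + 1/2 := by field_simp
  unfold fracBit
  rw [hx]
  by_cases h : 1/2 ≤ Int.fract (w * 2^k)
  · rw [if_pos h, if_neg (fun hc => (fract_half_flip _).mp hc h)]; ring
  · rw [if_neg h, if_pos ((fract_half_flip _).mpr h)]; ring

lemma fracBit_zero_of_lt (k : ℕ) {w : ℝ} (h0 : 0 ≤ w) (h : w < 1/(2*2^k)) :
    fracBit k w = 0 := by
  have h2 : (0:ℝ) < 2^k := by positivity
  have hlt : w * 2^k < 1/2 := by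
    have := mul_lt_mul_of_pos_right h h2
    calc w * 2^k < 1/(2*2^k) * 2^k := this
    _ = 1/2 := by field_simp
  unfold fracBit
  rw [Int.fract_eq_self.mpr ⟨by positivity, by linarith⟩, if_neg (by linarith)]

lemma measurable_fracBit (k : ℕ) : Measurable (fracBit k) := by
  unfold fracBit
  exact Measurable.ite
    (measurableSet_le measurable_const ((measurable_fract).comp (measurable_mul_const _)))
    measurable_const measurable_const

lemma fracBit_mem (k : ℕ) (w : ℝ) : fracBit k w = 0 ∨ fracBit k w = 1 := by
  unfold fracBit; split <;> simp

lemma fracBit_nonneg (k : ℕ) (w : ℝ) : 0 ≤ fracBit k w := by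
  rcases fracBit_mem k w with h | h <;> rw [h] <;> norm_num

lemma fracBit_le_one (k : ℕ) (w : ℝ) : fracBit k w ≤ 1 := by
  rcases fracBit_mem k w with h | h <;> rw [h] <;> norm_num

lemma shift_integral (h : ℝ → ℝ) (c : ℝ) :
    ∫ x in Ici c, h x = ∫ x in Ici (0:ℝ), h (x + c) := by
  rw [← integral_indicator measurableSet_Ici, ← integral_indicator measurableSet_Ici,
    ← integral_add_right_eq_self ((Ici c).indicator h) c]
  congr 1
  funext x
  simp only [indicator, mem_Ici]
  by_cases hx : 0 ≤ x
  · rw [if_pos hx, if_pos (by linarith)]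
  · rw [if_neg hx, if_neg (by intro hc; exact hx (by linarith))]

lemma shift_integrable (h : ℝ → ℝ) (c : ℝ) (hh : IntegrableOn h (Ici c)) :
    IntegrableOn (fun x => h (x + c)) (Ici (0:ℝ)) := by
  have h1 : Integrable ((Ici c).indicator h) := (integrable_indicator_iff measurableSet_Ici).mpr hh
  have h2 := h1.comp_add_right c
  apply (integrable_indicator_iff measurableSet_Ici).mp
  refine (congrArg (fun g : ℝ → ℝ => Integrable g volume) ?_).mpr h2
  funext x
  simp only [indicator, mem_Ici]
  by_cases hx : 0 ≤ x
  · rw [if_pos hx, if_pos (by linarith)]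
  · rw [if_neg hx, if_neg (by intro hc; exact hx (by linarith))]


/-- Bit-level structured sparsity: for a probability density `f` on `[0,∞)` that is
continuous on `[0,∞)`, continuously differentiable and strictly decreasing on `(0,∞)`,
with `f(w) → 0` as `w → ∞`, the probability `p k` that the `k`-th fractional bit equals 1
satisfies `|p k - 1/2| ≤ f 0 / 2^(2+k)`, `p k < 1/2`, and `p k → 1/2`. -/
theorem bit_level_structured_sparsity
    (f : ℝ → ℝ)
    (hf_nonneg : ∀ w ∈ Set.Ici (0 : ℝ), 0 ≤ f w)
    (hf_cont : ContinuousOn f (Set.Ici (0 : ℝ)))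
    (hf_smooth : ContDiffOn ℝ 1 f (Set.Ioi (0 : ℝ)))
    (hf_anti : StrictAntiOn f (Set.Ioi (0 : ℝ)))
    (hf_lim : Tendsto f atTop (nhds 0))
    (hf_int : IntegrableOn f (Set.Ici (0 : ℝ)))
    (hf_density : ∫ w in Set.Ici (0 : ℝ), f w = 1)
    (p : ℕ → ℝ)
    (hp : ∀ k, p k = ∫ w in Set.Ici (0 : ℝ), f w * fracBit k w) :
    (∀ k, |p k - 1 / 2| ≤ f 0 / 2 ^ (2 + k)) ∧
    (∀ k, p k < 1 / 2) ∧
    Tendsto p atTop (nhds (1 / 2)) := by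
  -- f is antitone on [0, ∞)
  have hfle : ∀ a b : ℝ, 0 ≤ a → a ≤ b → f b ≤ f a := by
    intro a b ha hab
    rcases eq_or_lt_of_le hab with rfl | hab'
    · exact le_refl _
    · rcases eq_or_lt_of_le ha with rfl | ha'
      · have htend : Tendsto f (nhdsWithin 0 (Ioi 0)) (nhds (f 0)) :=
          ((hf_cont 0 (mem_Ici.mpr le_rfl)).tendsto).mono_left
            (nhdsWithin_mono 0 Ioi_subset_Ici_self)
        refine ge_of_tendsto htend ?_
        filter_upwards [Ioo_mem_nhdsGT_of_mem ⟨le_rfl, hab'⟩] with t ht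
        exact (hf_anti ht.1 hab' ht.2).le
      · exact (hf_anti ha' (ha'.trans hab') hab').le
  -- main bound for each k
  have key : ∀ k : ℕ, 0 < 1 - 2 * p k ∧ 1 - 2 * p k ≤ f 0 * (1/(2*2^k)) := by
    intro k
    set c : ℝ := 1/(2*2^k) with hc_def
    have hc : 0 < c := by positivity
    have hb_meas : ∀ (μ : Measure ℝ), AEStronglyMeasurable (fracBit k) μ := fun μ =>
      (measurable_fracBit k).aestronglyMeasurable
    have hb1_meas : ∀ (μ : Measure ℝ), AEStronglyMeasurable (fun w => 1 - fracBit k w) μ := fun μ =>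
      (measurable_const.sub (measurable_fracBit k)).aestronglyMeasurable
    have hbd : ∀ x, ‖fracBit k x‖ ≤ 1 := fun x => by
      rw [Real.norm_eq_abs, abs_of_nonneg (fracBit_nonneg k x)]; exact fracBit_le_one k x
    have hbd1 : ∀ x, ‖1 - fracBit k x‖ ≤ 1 := fun x => by
      rw [Real.norm_eq_abs, abs_of_nonneg (by linarith [fracBit_le_one k x])]
      linarith [fracBit_nonneg k x]
    -- integrabilities
    have I1 : IntegrableOn (fun w => f w * fracBit k w) (Ici (0:ℝ)) :=
      (hf_int.bdd_mul (hb_meas _) (Filter.Eventually.of_forall hbd)).congr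
        (Filter.Eventually.of_forall fun x => mul_comm _ _)
    have I2 : IntegrableOn (fun w => f w * (1 - fracBit k w)) (Ici (0:ℝ)) :=
      (hf_int.bdd_mul (hb1_meas _) (Filter.Eventually.of_forall hbd1)).congr
        (Filter.Eventually.of_forall fun x => mul_comm _ _)
    have I3 : IntegrableOn (fun w => f (w + c)) (Ici (0:ℝ)) :=
      shift_integrable f c (hf_int.mono_set (Ici_subset_Ici.mpr hc.le))
    have I4 : IntegrableOn (fun w => f (w + c) * (1 - fracBit k w)) (Ici (0:ℝ)) :=
      (I3.bdd_mul (hb1_meas _) (Filter.Eventually.of_forall hbd1)).congr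
        (Filter.Eventually.of_forall fun x => mul_comm _ _)
    have I5 : IntegrableOn (fun w => (f w - f (w + c)) * (1 - fracBit k w)) (Ici (0:ℝ)) :=
      (I2.sub I4).congr (Filter.Eventually.of_forall fun x => (sub_mul _ _ _).symm)
    have I6 : IntegrableOn (fun w => f w - f (w + c)) (Ici (0:ℝ)) := hf_int.sub I3
    have hdisj : Disjoint (Ico (0:ℝ) c) (Ici c) :=
      Set.disjoint_left.mpr fun x hx hx' => absurd (mem_Ici.mp hx') (not_le.mpr hx.2)
    -- p k = ∫_{Ici c} f * b
    have hsplit0 : ∫ w in Ici (0:ℝ), f w * fracBit k w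
        = (∫ w in Ico (0:ℝ) c, f w * fracBit k w) + ∫ w in Ici c, f w * fracBit k w := by
      rw [← setIntegral_union (hdisj) measurableSet_Ici
        (I1.mono_set Ico_subset_Ici_self) (I1.mono_set (Ici_subset_Ici.mpr hc.le)),
        Ico_union_Ici_eq_Ici hc.le]
    have hzero : ∫ w in Ico (0:ℝ) c, f w * fracBit k w = 0 := by
      rw [setIntegral_congr_fun measurableSet_Ico
        (fun w hw => by rw [fracBit_zero_of_lt k hw.1 hw.2, mul_zero])]
      exact integral_zero _ _
    have e1 : p k = ∫ w in Ici c, f w * fracBit k w := by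
      rw [hp k]
      linarith [hsplit0, hzero]
    have e2 : p k = ∫ w in Ici (0:ℝ), f (w + c) * (1 - fracBit k w) := by
      rw [e1, shift_integral (fun w => f w * fracBit k w) c]
      refine setIntegral_congr_fun measurableSet_Ici (fun w hw => ?_)
      show f (w + c) * fracBit k (w + c) = f (w + c) * (1 - fracBit k w)
      rw [hc_def, fracBit_add_half k w]
    -- total mass split
    have hsum : ∫ w in Ici (0:ℝ), (f w * (1 - fracBit k w) + f w * fracBit k w)
        = ∫ w in Ici (0:ℝ), f w :=
      setIntegral_congr_fun measurableSet_Ici (fun w _ => by ring)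
    have hone : (1:ℝ) = (∫ w in Ici (0:ℝ), f w * (1 - fracBit k w)) + ∫ w in Ici (0:ℝ), f w * fracBit k w := by
      rw [← integral_add I2 I1, hsum, hf_density]
    have hkey : ∫ w in Ici (0:ℝ), (f w - f (w + c)) * (1 - fracBit k w) = 1 - 2 * p k := by
      have hsub : ∫ w in Ici (0:ℝ), (f w - f (w + c)) * (1 - fracBit k w)
          = (∫ w in Ici (0:ℝ), f w * (1 - fracBit k w)) - ∫ w in Ici (0:ℝ), f (w + c) * (1 - fracBit k w) := by
        rw [← integral_sub I2 I4]
        refine setIntegral_congr_fun measurableSet_Ici (fun w _ => by ring)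
      rw [hsub, ← e2]
      linarith [hone, hp k]
    constructor
    · -- positivity
      rw [← hkey]
      have hge : ∫ w in Ioc (0:ℝ) c, (f w - f (w + c)) * (1 - fracBit k w)
          ≤ ∫ w in Ici (0:ℝ), (f w - f (w + c)) * (1 - fracBit k w) := by
        refine setIntegral_mono_set I5 ?_ (HasSubset.Subset.eventuallyLE (fun x hx => le_of_lt hx.1))
        refine (ae_restrict_iff' measurableSet_Ici).mpr (Filter.Eventually.of_forall fun w hw => ?_)
        have h1 : f (w + c) ≤ f w := hfle w (w + c) hw (by linarith)
        have h2 : 0 ≤ 1 - fracBit k w := by linarith [fracBit_le_one k w]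
        exact mul_nonneg (by linarith) h2
      have hpos : 0 < ∫ w in Ioc (0:ℝ) c, (f w - f (w + c)) * (1 - fracBit k w) := by
        rw [← intervalIntegral.integral_of_le hc.le]
        refine intervalIntegral.intervalIntegral_pos_of_pos_on ?_ ?_ hc
        · exact (intervalIntegrable_iff_integrableOn_Ioc_of_le hc.le).mpr
            (I5.mono_set (fun x hx => le_of_lt hx.1))
        · intro x hx
          have hb0 : fracBit k x = 0 := fracBit_zero_of_lt k hx.1.le hx.2
          rw [hb0]
          have hlt : f (x + c) < f x :=
            hf_anti hx.1 (mem_Ioi.mpr (by linarith [hx.1, hc])) (by linarith [hc])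
          simp only [sub_zero, mul_one]
          linarith
      linarith
    · -- upper bound
      rw [← hkey]
      have hmono : ∫ w in Ici (0:ℝ), (f w - f (w + c)) * (1 - fracBit k w)
          ≤ ∫ w in Ici (0:ℝ), (f w - f (w + c)) := by
        refine setIntegral_mono_on I5 I6 measurableSet_Ici (fun w hw => ?_)
        have h1 : f (w + c) ≤ f w := hfle w (w + c) hw (by linarith)
        have h2 : 1 - fracBit k w ≤ 1 := by linarith [fracBit_nonneg k w]
        have h3 : 0 ≤ 1 - fracBit k w := by linarith [fracBit_le_one k w]
        nlinarith
      have hdiff : ∫ w in Ici (0:ℝ), (f w - f (w + c)) = ∫ w in Ico (0:ℝ) c, f w := by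
        rw [integral_sub hf_int I3, ← shift_integral f c]
        have : ∫ w in Ici (0:ℝ), f w = (∫ w in Ico (0:ℝ) c, f w) + ∫ w in Ici c, f w := by
          rw [← setIntegral_union (hdisj) measurableSet_Ici
            (hf_int.mono_set Ico_subset_Ici_self) (hf_int.mono_set (Ici_subset_Ici.mpr hc.le)),
            Ico_union_Ici_eq_Ici hc.le]
        linarith
      have hconst : ∫ w in Ico (0:ℝ) c, f w ≤ f 0 * c := by
        have h1 : ∫ w in Ico (0:ℝ) c, f w ≤ ∫ _ in Ico (0:ℝ) c, f 0 := by
          refine setIntegral_mono_on (hf_int.mono_set Ico_subset_Ici_self)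
            ((integrableOn_const_iff (C := f 0)).mpr (Or.inr (by rw [Real.volume_Ico]; exact ENNReal.ofReal_lt_top)))
            measurableSet_Ico (fun x hx => hfle 0 x le_rfl hx.1)
        have h2 : ∫ _ in Ico (0:ℝ) c, f 0 = c * f 0 := by
          rw [setIntegral_const, Real.volume_real_Ico_of_le hc.le, smul_eq_mul,
            sub_zero]
        rw [h2] at h1
        linarith
      calc ∫ w in Ici (0:ℝ), (f w - f (w + c)) * (1 - fracBit k w)
          ≤ ∫ w in Ici (0:ℝ), (f w - f (w + c)) := hmono
        _ = ∫ w in Ico (0:ℝ) c, f w := hdiff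
        _ ≤ f 0 * c := hconst
  -- conclude
  have hbound : ∀ k, |p k - 1 / 2| ≤ f 0 / 2 ^ (2 + k) := by
    intro k
    obtain ⟨h1, h2⟩ := key k
    have heq : f 0 / 2 ^ (2 + k) = f 0 * (1/(2*2^k)) / 2 := by
      have h4 : (2:ℝ) ^ (2 + k) = 4 * 2 ^ k := by rw [pow_add]; norm_num
      have h2k : (0:ℝ) < 2 ^ k := by positivity
      rw [h4]
      ring
    rw [abs_of_nonpos (by linarith), heq]
    linarith
  refine ⟨hbound, fun k => by linarith [(key k).1], ?_⟩
  have h0 : Tendsto (fun k : ℕ => f 0 / 2 ^ (2 + k)) atTop (nhds 0) := by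
    have h1 : Tendsto (fun k : ℕ => ((1:ℝ)/2) ^ k) atTop (nhds 0) :=
      tendsto_pow_atTop_nhds_zero_of_lt_one (by norm_num) (by norm_num)
    have h2 : Tendsto (fun k : ℕ => f 0 * ((1:ℝ)/2) ^ (2 + k)) atTop (nhds (f 0 * 0)) := by
      refine Tendsto.const_mul _ ?_
      have := h1.comp (tendsto_add_atTop_nat 2)
      simpa [Function.comp_def, add_comm] using this
    simpa [div_eq_mul_inv, one_div, inv_pow] using h2
  have hlow : ∀ k, 1/2 - f 0 / 2 ^ (2 + k) ≤ p k := fun k => by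
    have := (abs_le.mp (hbound k)).1
    linarith
  have hhigh : ∀ k, p k ≤ 1/2 := fun k => by linarith [(key k).1]
  refine tendsto_of_tendsto_of_tendsto_of_le_of_le ?_ tendsto_const_nhds hlow hhigh
  have := (tendsto_const_nhds (x := (1:ℝ)/2) (f := atTop (α := ℕ))).sub h0
  simpa using this
end

section
/- Let f : [0,∞) → [0,∞) be a probability density that is continuous on [0,∞) and continuously differentiable on (0,∞), with f' integrable on (0,∞) and f(w) → 0 as w → ∞. Fix a natural number k, set L := 2^(−k), and define A_L(s) := min{s, L − s} for s ∈ [0, L]. Then Δ_k := Σ_{m=0}^∞ ∫_0^{L/2} [ f(mL + u) − f(mL + u + L/2) ] du satisfies Δ_k = Σ_{m=0}^∞ ∫_0^L ( −f'(mL + s) ) · A_L(s) ds. -/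
open MeasureTheory Filter Set

lemma tent_cell_key (f : ℝ → ℝ)
    (hf_cont : ContinuousOn f (Set.Ici (0 : ℝ)))
    (hf_smooth : ContDiffOn ℝ 1 f (Set.Ioi (0 : ℝ)))
    (hdi : IntegrableOn (deriv f) (Set.Ioi (0 : ℝ)))
    (a L : ℝ) (ha : 0 ≤ a) (hL : 0 < L) :
    ∫ u in (0 : ℝ)..(L / 2), (f (a + u) - f (a + u + L / 2)) =
    ∫ s in (0 : ℝ)..L, (-(deriv f (a + s))) * min s (L - s) := by
  have hL2 : (0 : ℝ) < L / 2 := by positivity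
  -- continuity of shifted f on [0, L]
  have hfc : ContinuousOn (fun s => f (a + s)) (Icc 0 L) := by
    apply hf_cont.comp ((continuous_const.add continuous_id).continuousOn)
    intro s hs
    simp only [mem_Ici, id_eq, Pi.add_apply]
    linarith [hs.1]
  have hfi : ∀ b c : ℝ, 0 ≤ b → c ≤ L → b ≤ c →
      IntervalIntegrable (fun s => f (a + s)) volume b c := by
    intro b c hb hc hbc
    exact (hfc.mono (by rw [uIcc_of_le hbc]; exact Icc_subset_Icc hb hc)).intervalIntegrable
  -- interval integrability of shifted derivative on [0, L]
  have hdint : IntervalIntegrable (fun s => deriv f (a + s)) volume 0 L := by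
    have hfull : IntervalIntegrable (deriv f) volume a (a + L) := by
      rw [intervalIntegrable_iff_integrableOn_Ioc_of_le (by linarith)]
      exact hdi.mono_set (fun x hx => lt_of_le_of_lt ha hx.1)
    have := hfull.comp_add_left a
    simpa using this
  have hdint1 : IntervalIntegrable (fun s => deriv f (a + s)) volume 0 (L / 2) :=
    hdint.mono_set (by
      apply uIcc_subset_uIcc <;> rw [uIcc_of_le hL.le] <;>
        constructor <;> linarith)
  have hdint2 : IntervalIntegrable (fun s => deriv f (a + s)) volume (L / 2) L :=
    hdint.mono_set (by
      apply uIcc_subset_uIcc <;> rw [uIcc_of_le hL.le] <;>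
        constructor <;> linarith)
  -- derivative of the shifted function
  have hd : ∀ s ∈ Ioo (0 : ℝ) L, HasDerivAt (fun u => f (a + u)) (deriv f (a + s)) s := by
    intro s hs
    have hpos : 0 < a + s := by linarith [hs.1]
    have h1 : HasDerivAt f (deriv f (a + s)) (a + s) :=
      ((hf_smooth.differentiableOn one_ne_zero).differentiableAt
        (Ioi_mem_nhds hpos)).hasDerivAt
    have := h1.comp s ((hasDerivAt_id s).const_add a)
    simpa [Function.comp_def] using this
  -- integration by parts on [0, L/2] with g₁ s = s * f (a + s)
  have I1 : ∫ s in (0 : ℝ)..(L / 2), (f (a + s) + s * deriv f (a + s))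
      = (L / 2) * f (a + L / 2) := by
    have hcont : ContinuousOn (fun s => s * f (a + s)) (Icc 0 (L / 2)) :=
      continuousOn_id.mul (hfc.mono (Icc_subset_Icc le_rfl (by linarith)))
    have hderiv : ∀ s ∈ Ioo (0 : ℝ) (L / 2),
        HasDerivAt (fun u => u * f (a + u)) (f (a + s) + s * deriv f (a + s)) s := by
      intro s hs
      have := (hasDerivAt_id s).mul (hd s ⟨hs.1, by linarith [hs.2]⟩)
      simpa [mul_comm, Pi.mul_def] using this
    have hint : IntervalIntegrable (fun s => f (a + s) + s * deriv f (a + s))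
        volume 0 (L / 2) :=
      (hfi 0 (L / 2) le_rfl (by linarith) hL2.le).add
        (hdint1.continuousOn_mul continuous_id.continuousOn)
    have := intervalIntegral.integral_eq_sub_of_hasDerivAt_of_le hL2.le hcont hderiv hint
    simpa using this
  -- integration by parts on [L/2, L] with g₂ s = (L - s) * f (a + s)
  have I2 : ∫ s in (L / 2)..L, (-f (a + s) + (L - s) * deriv f (a + s))
      = -((L / 2) * f (a + L / 2)) := by
    have hcont : ContinuousOn (fun s => (L - s) * f (a + s)) (Icc (L / 2) L) :=
      ((continuous_const.sub continuous_id).continuousOn).mul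
        (hfc.mono (Icc_subset_Icc (by linarith) le_rfl))
    have hderiv : ∀ s ∈ Ioo (L / 2) L,
        HasDerivAt (fun u => (L - u) * f (a + u))
          (-f (a + s) + (L - s) * deriv f (a + s)) s := by
      intro s hs
      have := ((hasDerivAt_id s).const_sub L).mul (hd s ⟨by linarith [hs.1], hs.2⟩)
      have h2 : (-1 : ℝ) * f (a + s) + (L - s) * deriv f (a + s)
          = -f (a + s) + (L - s) * deriv f (a + s) := by ring
      simpa [h2, Pi.mul_def] using this
    have hint : IntervalIntegrable (fun s => -f (a + s) + (L - s) * deriv f (a + s))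
        volume (L / 2) L :=
      ((hfi (L / 2) L hL2.le le_rfl (by linarith)).neg).add
        (hdint2.continuousOn_mul ((continuous_const.sub continuous_id).continuousOn))
    have := intervalIntegral.integral_eq_sub_of_hasDerivAt_of_le (by linarith) hcont hderiv hint
    rw [this]
    ring_nf
  -- split the sums inside the integrals
  have hmul1 : IntervalIntegrable (fun s => s * deriv f (a + s)) volume 0 (L / 2) :=
    hdint1.continuousOn_mul continuous_id.continuousOn
  have hmul2 : IntervalIntegrable (fun s => (L - s) * deriv f (a + s)) volume (L / 2) L :=
    hdint2.continuousOn_mul ((continuous_const.sub continuous_id).continuousOn)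
  have A : ∫ s in (0 : ℝ)..(L / 2), s * deriv f (a + s)
      = (L / 2) * f (a + L / 2) - ∫ s in (0 : ℝ)..(L / 2), f (a + s) := by
    have := intervalIntegral.integral_add (hfi 0 (L / 2) le_rfl (by linarith) hL2.le) hmul1
    rw [this] at I1
    linarith
  have B : ∫ s in (L / 2)..L, (L - s) * deriv f (a + s)
      = -((L / 2) * f (a + L / 2)) + ∫ s in (L / 2)..L, f (a + s) := by
    have hneg : IntervalIntegrable (fun s => -f (a + s)) volume (L / 2) L :=
      (hfi (L / 2) L hL2.le le_rfl (by linarith)).neg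
    have := intervalIntegral.integral_add (f := fun s => -f (a + s))
      (g := fun s => (L - s) * deriv f (a + s)) hneg hmul2
    rw [this, intervalIntegral.integral_neg] at I2
    linarith
  -- rewrite RHS: split at L/2 and evaluate the min
  have hsplit : ∫ s in (0 : ℝ)..L, (-(deriv f (a + s))) * min s (L - s)
      = (∫ s in (0 : ℝ)..(L / 2), (-(deriv f (a + s))) * min s (L - s))
      + ∫ s in (L / 2)..L, (-(deriv f (a + s))) * min s (L - s) := by
    refine (intervalIntegral.integral_add_adjacent_intervals ?_ ?_).symm
    · have : (fun s => (-(deriv f (a + s))) * min s (L - s))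
          = fun s => (-(min s (L - s))) * deriv f (a + s) := by
        funext s; ring
      rw [this]
      exact hdint1.continuousOn_mul
        ((continuous_id.min (continuous_const.sub continuous_id)).neg.continuousOn)
    · have : (fun s => (-(deriv f (a + s))) * min s (L - s))
          = fun s => (-(min s (L - s))) * deriv f (a + s) := by
        funext s; ring
      rw [this]
      exact hdint2.continuousOn_mul
        ((continuous_id.min (continuous_const.sub continuous_id)).neg.continuousOn)
  have hcong1 : ∫ s in (0 : ℝ)..(L / 2), (-(deriv f (a + s))) * min s (L - s)
      = ∫ s in (0 : ℝ)..(L / 2), -(s * deriv f (a + s)) := by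
    apply intervalIntegral.integral_congr
    intro s hs
    rw [uIcc_of_le hL2.le] at hs
    have hmin : min s (L - s) = s := min_eq_left (by linarith [hs.1, hs.2])
    dsimp only
    rw [hmin]; ring
  have hcong2 : ∫ s in (L / 2)..L, (-(deriv f (a + s))) * min s (L - s)
      = ∫ s in (L / 2)..L, -((L - s) * deriv f (a + s)) := by
    apply intervalIntegral.integral_congr
    intro s hs
    rw [uIcc_of_le (by linarith : L / 2 ≤ L)] at hs
    have hmin : min s (L - s) = L - s := min_eq_right (by linarith [hs.1, hs.2])
    dsimp only
    rw [hmin]; ring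
  -- rewrite LHS
  have hshift : ∫ u in (0 : ℝ)..(L / 2), f (a + u + L / 2)
      = ∫ s in (L / 2)..L, f (a + s) := by
    have h1 : (fun u => f (a + u + L / 2)) = fun u => (fun s => f (a + s)) (u + L / 2) := by
      funext u; rw [add_assoc]
    rw [h1, intervalIntegral.integral_comp_add_right (fun s => f (a + s)) (L / 2)]
    norm_num
  have hLHS : ∫ u in (0 : ℝ)..(L / 2), (f (a + u) - f (a + u + L / 2))
      = (∫ s in (0 : ℝ)..(L / 2), f (a + s)) - ∫ s in (L / 2)..L, f (a + s) := by
    have hint2 : IntervalIntegrable (fun u => f (a + u + L / 2)) volume 0 (L / 2) := by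
      have h1 : (fun u => f (a + u + L / 2)) = fun u => (fun s => f (a + s)) (u + L / 2) := by
        funext u; rw [add_assoc]
      rw [h1]
      have h0 := (hfi (L / 2) L hL2.le le_rfl (by linarith)).comp_add_right (L / 2)
      have heq : L - L / 2 = L / 2 := by ring
      rw [heq, sub_self] at h0
      exact h0
    rw [intervalIntegral.integral_sub (hfi 0 (L / 2) le_rfl (by linarith) hL2.le) hint2, hshift]
  rw [hLHS, hsplit, hcong1, hcong2, intervalIntegral.integral_neg,
    intervalIntegral.integral_neg, A, B]
  ring

/-- For a probability density `f` on `[0,∞)` that is continuous on `[0,∞)` and continuously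
differentiable on `(0,∞)`, with `f'` integrable on `(0,∞)` and `f(w) → 0` as `w → ∞`,
the quantity `Δ_k = Σ_m ∫_0^{L/2} (f(mL+u) - f(mL+u+L/2)) du` can be rewritten using the
tent kernel `A_L(s) = min(s, L - s)` as `Σ_m ∫_0^L (-f'(mL+s)) · A_L(s) ds`, `L = 2^(-k)`. -/
theorem delta_eq_tsum_tent_kernel
    (f : ℝ → ℝ)
    (hf_nonneg : ∀ w ∈ Set.Ici (0 : ℝ), 0 ≤ f w)
    (hf_cont : ContinuousOn f (Set.Ici (0 : ℝ)))
    (hf_smooth : ContDiffOn ℝ 1 f (Set.Ioi (0 : ℝ)))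
    (hf_deriv_int : IntegrableOn (deriv f) (Set.Ioi (0 : ℝ)))
    (hf_lim : Tendsto f atTop (nhds 0))
    (hf_int : IntegrableOn f (Set.Ici (0 : ℝ)))
    (hf_density : ∫ w in Set.Ici (0 : ℝ), f w = 1)
    (k : ℕ) (L : ℝ) (hL : L = 2 ^ (-(k : ℤ))) :
    ∑' m : ℕ, ∫ u in (0 : ℝ)..(L / 2), (f (m * L + u) - f (m * L + u + L / 2)) =
    ∑' m : ℕ, ∫ s in (0 : ℝ)..L, (-(deriv f (m * L + s))) * min s (L - s) := by
  have hLpos : 0 < L := by rw [hL]; positivity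
  exact tsum_congr fun m =>
    tent_cell_key f hf_cont hf_smooth hf_deriv_int (m * L) L
      (by positivity) hLpos
end
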